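/- arXiv:2411.14581 — 4 statements merged into one kernel-verified Lean document; each statement's English description precedes it below -/
import Mathlib

section
/- The definitive-prefix operator distributes over arbitrary intersections: for any indexed family of trace sets (X_i)_{i∈I}, ↯(⋂_{i∈I} X_i) = ⋂_{i∈I} ↯X_i. -/
/-- A trace is a finite list of states or an infinite stream of states. -/
def Trace (σ : Type) := List σ ⊕ (ℕ → σ)

namespace Trace

variable {σ : Type}

/-- Concatenation of traces; if the first is infinite, the result is the first. -/
def app : Trace σ → Trace σ → Trace σ
  | Sum.inl l, Sum.inl l' => Sum.inl (l ++ l')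
  | Sum.inl l, Sum.inr s =>
      Sum.inr (fun n => if h : n < l.length then l.get ⟨n, h⟩ else s (n - l.length))
  | Sum.inr s, _ => Sum.inr s

instance : Append (Trace σ) := ⟨app⟩

/-- The empty trace ε. -/
def eps : Trace σ := Sum.inl []

/-- A trace is infinite iff it is a stream. -/
def Inf (t : Trace σ) : Prop := t.isRight

/-- Drop the first state of a trace. -/
def drop1 : Trace σ → Trace σ
  | Sum.inl [] => Sum.inl []
  | Sum.inl (_ :: l) => Sum.inl l
  | Sum.inr s => Sum.inr (fun n => s (n + 1))

/-- Drop the first `n` states of a trace. -/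
def drop (t : Trace σ) (n : ℕ) : Trace σ := drop1^[n] t

/-- The first state of a trace, if any. -/
def head? : Trace σ → Option σ
  | Sum.inl [] => none
  | Sum.inl (a :: _) => some a
  | Sum.inr s => some (s 0)

/-- The set of prefixes of a trace. -/
def pre (t : Trace σ) : Set (Trace σ) := {u | ∃ v, t = u ++ v}

/-- The set of prefixes of traces in a set: ↓X. -/
def preS (X : Set (Trace σ)) : Set (Trace σ) := ⋃ t ∈ X, pre t

/-- The set of extensions of a trace: ↑t. -/
def ext (t : Trace σ) : Set (Trace σ) := {u | ∃ v, u = t ++ v}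

/-- The definitive prefixes of a set of traces: ↯X. -/
def dp (X : Set (Trace σ)) : Set (Trace σ) := {t | ext t ⊆ preS X}

/-- A set of traces is definitive iff it equals its own set of definitive prefixes. -/
def Definitive (X : Set (Trace σ)) : Prop := X = dp X

/-- Definitive union ⩁ of a collection of trace sets. -/
def dUnionS (S : Set (Set (Trace σ))) : Set (Trace σ) := dp (⋃₀ S)

/-- Binary / indexed definitive union. -/
def dUnion (X Y : Set (Trace σ)) : Set (Trace σ) := dp (X ∪ Y)

def dUnionI {ι : Sort*} (X : ι → Set (Trace σ)) : Set (Trace σ) := dp (⋃ i, X i)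

/-- The prepend operation ▷X. -/
def prepend (X : Set (Trace σ)) : Set (Trace σ) := {t | t.drop 1 ∈ X}

/-- Σ^ω, the set of infinite traces. -/
def omegaSet (σ : Type) : Set (Trace σ) := {t | t.Inf}

/-- The first state of a trace, with the empty state as default. -/
def st0 {A : Type} (t : Trace (Set A)) : Set A := (t.head?).getD ∅

end Trace

/-- Syntax of LTL formulae over atomic propositions `A`. -/
inductive LTL (A : Type) where
  | top : LTL A
  | atom : A → LTL A
  | neg : LTL A → LTL A
  | and : LTL A → LTL A → LTL A
  | next : LTL A → LTL A
  | until_ : LTL A → LTL A → LTL A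

namespace LTL

variable {A : Type}

open Trace

/-- Conventional LTL satisfaction on (infinite) traces. -/
def Sat : Trace (Set A) → LTL A → Prop
  | t, .top => True
  | t, .atom a => a ∈ t.st0
  | t, .neg φ => ¬ Sat t φ
  | t, .and φ ψ => Sat t φ ∧ Sat t ψ
  | t, .next φ => Sat (t.drop 1) φ
  | t, .until_ φ ψ => ∃ i, Sat (t.drop i) ψ ∧ ∀ j < i, Sat (t.drop j) φ

/-- Answer-indexed family semantics of conventional LTL (sets of infinite traces). -/
def sem : LTL A → Bool → Set (Trace (Set A))
  | .top, true => omegaSet (Set A)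
  | .top, false => ∅
  | .atom a, true => {t | t.Inf ∧ a ∈ t.st0}
  | .atom a, false => {t | t.Inf ∧ a ∉ t.st0}
  | .neg φ, b => sem φ (!b)
  | .and φ ψ, true => sem φ true ∩ sem ψ true
  | .and φ ψ, false => sem φ false ∪ sem ψ false
  | .next φ, b => {t | t.drop 1 ∈ sem φ b}
  | .until_ φ ψ, true => {t | ∃ k, (∀ i < k, t.drop i ∈ sem φ true) ∧ t.drop k ∈ sem ψ true}
  | .until_ φ ψ, false => {t | ∀ k, (∃ i < k, t.drop i ∈ sem φ false) ∨ t.drop k ∈ sem ψ false}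

/-- Answer-indexed family semantics of LTL₃ (definitive sets of finite-or-infinite traces). -/
def sem3 : LTL A → Bool → Set (Trace (Set A))
  | .top, true => Set.univ
  | .top, false => ∅
  | .atom a, true => dp {t | t ≠ eps ∧ a ∈ t.st0}
  | .atom a, false => dp {t | t ≠ eps ∧ a ∉ t.st0}
  | .neg φ, b => sem3 φ (!b)
  | .and φ ψ, true => sem3 φ true ∩ sem3 ψ true
  | .and φ ψ, false => dUnion (sem3 φ false) (sem3 ψ false)
  | .next φ, b => prepend (sem3 φ b)
  | .until_ φ ψ, true =>
      dUnionI (fun k => (fun X => prepend X ∩ sem3 φ true)^[k] (sem3 ψ true))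
  | .until_ φ ψ, false =>
      ⋂ k, (fun X => dUnion (prepend X) (sem3 φ false))^[k] (sem3 ψ false)

end LTL

/-! Every trace `u` has an extension `w` with no proper extension: `u` followed by a constant
stream, or `ε` itself when there are no states. Such a `w` lies in `X` as soon as it lies in `↓X`,
so if `↑t ⊆ ↓Xᵢ` for all `i`, then each `u ∈ ↑t` is a prefix of a common element `w ∈ ⋂ᵢ Xᵢ`. -/

namespace Trace

variable {σ : Type}

theorem append_assoc (a b c : Trace σ) : a ++ b ++ c = a ++ (b ++ c) := by
  rcases a with l | s
  · rcases b with l' | s'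
    · rcases c with l'' | s''
      · exact congrArg Sum.inl (List.append_assoc l l' l'')
      · change (Sum.inr _ : Trace σ) = Sum.inr _
        congr 1
        funext n
        simp only [List.length_append, List.get_eq_getElem, List.getElem_append]
        split_ifs <;> first | rfl | omega | (congr 1; omega)
    · rfl
  · rfl

theorem append_eps (t : Trace σ) : t ++ eps = t := by
  rcases t with l | s
  · exact congrArg Sum.inl (List.append_nil l)
  · rfl

theorem Inf.append_eq {t : Trace σ} (ht : t.Inf) (v : Trace σ) : t ++ v = t := by
  rcases t with l | s
  · simp [Inf] at ht
  · rfl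

theorem ext_subset_ext {t u : Trace σ} (hu : u ∈ ext t) : ext u ⊆ ext t := by
  rintro w ⟨v, rfl⟩
  obtain ⟨v', rfl⟩ := hu
  exact ⟨v' ++ v, append_assoc t v' v⟩

theorem ext_subset_singleton_of_inf {t : Trace σ} (ht : t.Inf) : ext t ⊆ {t} := by
  rintro w ⟨v, rfl⟩
  exact ht.append_eq v

theorem ext_subset_singleton_of_isEmpty [IsEmpty σ] (t : Trace σ) : ext t ⊆ {t} := by
  have eq_eps : ∀ w : Trace σ, w = eps := by
    rintro ((_ | ⟨x, _⟩) | s)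
    exacts [rfl, isEmptyElim x, isEmptyElim (s 0)]
  exact fun w _ => (eq_eps w).trans (eq_eps t).symm

theorem exists_mem_ext_ext_subset_singleton (u : Trace σ) : ∃ w ∈ ext u, ext w ⊆ {w} := by
  cases isEmpty_or_nonempty σ
  · exact ⟨u, ⟨eps, (append_eps u).symm⟩, ext_subset_singleton_of_isEmpty u⟩
  · obtain ⟨a⟩ := ‹Nonempty σ›
    have hinf : (u ++ show Trace σ from Sum.inr fun _ => a).Inf := by
      rcases u with l | s <;> rfl
    exact ⟨_, ⟨_, rfl⟩, ext_subset_singleton_of_inf hinf⟩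

theorem mem_of_mem_preS {X : Set (Trace σ)} {w : Trace σ} (hw : ext w ⊆ {w})
    (h : w ∈ preS X) : w ∈ X := by
  simp only [preS, Set.mem_iUnion₂] at h
  obtain ⟨x, hx, v, rfl⟩ := h
  rwa [← hw ⟨v, rfl⟩]

theorem preS_mono {X Y : Set (Trace σ)} (h : X ⊆ Y) : preS X ⊆ preS Y :=
  Set.biUnion_subset_biUnion_left h

theorem dp_mono {X Y : Set (Trace σ)} (h : X ⊆ Y) : dp X ⊆ dp Y :=
  fun _ ht => ht.trans (preS_mono h)

end Trace

theorem dp_iInter {σ : Type} {ι : Sort*} (X : ι → Set (Trace σ)) :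
    Trace.dp (⋂ i, X i) = ⋂ i, Trace.dp (X i) := by
  refine subset_antisymm (Set.subset_iInter fun i => Trace.dp_mono (Set.iInter_subset X i)) ?_
  intro t ht u hu
  obtain ⟨w, hwu, hw⟩ := Trace.exists_mem_ext_ext_subset_singleton u
  have hwX : w ∈ ⋂ i, X i := Set.mem_iInter.2 fun i =>
    Trace.mem_of_mem_preS hw (Set.mem_iInter.1 ht i (Trace.ext_subset_ext hu hwu))
  exact Set.mem_biUnion hwX hwu
end

section
/- The map Pr(X) = X ∩ Σ^ω from definitive sets to sets of infinite traces is monotone and preserves arbitrary intersections and definitive unions: Pr(⋂_{i} X_i) = ⋂_i Pr(X_i) and Pr(⩁_i X_i) = ⋃_i Pr(X_i) for any family of definitive sets X_i. -/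
lemma Trace.inf_app {σ : Type} (t v : Trace σ) (h : t.Inf) : t ++ v = t := by
  rcases t with l | s
  · simp [Trace.Inf, Sum.isRight] at h
  · rfl

lemma Trace.dp_mono_s11 {σ : Type} {X Y : Set (Trace σ)} (h : X ⊆ Y) :
    Trace.dp X ⊆ Trace.dp Y := by
  intro t ht u hu
  have := ht hu
  simp only [Trace.preS, Set.mem_iUnion] at this ⊢
  obtain ⟨w, hw, hp⟩ := this
  exact ⟨w, h hw, hp⟩

theorem pr_preserves {σ : Type} {ι : Sort*} [Nonempty ι]
    (X : ι → Set (Trace σ)) (hX : ∀ i, Trace.Definitive (X i)) :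
    (∀ A B : Set (Trace σ), Trace.Definitive A → Trace.Definitive B → A ⊆ B →
      A ∩ Trace.omegaSet σ ⊆ B ∩ Trace.omegaSet σ) ∧
    (⋂ i, X i) ∩ Trace.omegaSet σ = ⋂ i, (X i ∩ Trace.omegaSet σ) ∧
    Trace.dUnionI X ∩ Trace.omegaSet σ = ⋃ i, (X i ∩ Trace.omegaSet σ) := by
  refine ⟨fun A B _ _ hAB => Set.inter_subset_inter_left _ hAB, ?_, ?_⟩
  · ext t
    simp only [Set.mem_inter_iff, Set.mem_iInter]
    constructor
    · rintro ⟨h1, h2⟩ i; exact ⟨h1 i, h2⟩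
    · intro h
      obtain ⟨i⟩ := ‹Nonempty ι›
      exact ⟨fun j => (h j).1, (h i).2⟩
  · ext t
    simp only [Set.mem_inter_iff, Set.mem_iUnion, Trace.dUnionI]
    constructor
    · rintro ⟨h1, h2⟩
      have htt : t ∈ Trace.ext t := ⟨Trace.eps, by
        rcases t with l | s
        · show _ = Sum.inl (l ++ []); simp
        · rfl⟩
      have := h1 htt
      simp only [Trace.preS, Set.mem_iUnion, Set.mem_iUnion, Trace.pre,
        Set.mem_setOf_eq, exists_prop] at this
      obtain ⟨w, hw, v, hv⟩ := this
      obtain ⟨i, hi⟩ := hw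
      have : w = t := by rw [hv, Trace.inf_app t v h2]
      exact ⟨i, this ▸ hi, h2⟩
    · rintro ⟨i, hi, h2⟩
      refine ⟨?_, h2⟩
      have : X i ⊆ Trace.dp (⋃ j, X j) := by
        rw [hX i]; exact Trace.dp_mono_s11 (Set.subset_iUnion X i)
      exact this hi
end

section
/- The prepend operation preserves definitiveness: if X is a definitive set of traces, then ▷X = {t | drop t 1 ∈ X} is also definitive. -/
/-! `▷X` is the preimage of `X` under `drop1`, and `drop1` maps the extensions `↑t` of a trace
onto the extensions of `drop1 t` (for `t = ε` because `drop1` is surjective). Hence taking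
prefix closures `↓` and definitive prefixes `↯` commutes with this preimage, so `▷` preserves
the fixed points of `↯`. -/

namespace Trace

variable {σ : Type}

def cons (a : σ) : Trace σ → Trace σ
  | Sum.inl l => Sum.inl (a :: l)
  | Sum.inr s => Sum.inr (fun n => Nat.rec a (fun m _ => s m) n)

@[simp]
lemma drop1_cons (a : σ) (t : Trace σ) : drop1 (cons a t) = t := by
  cases t <;> rfl

@[simp]
lemma drop1_eps : drop1 (eps : Trace σ) = eps := rfl

lemma eps_app (v : Trace σ) : eps ++ v = v := by
  cases v <;> rfl

lemma cons_app (a : σ) (t v : Trace σ) : cons a t ++ v = cons a (t ++ v) := by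
  rcases t with l | s
  · rcases v with l' | s
    · rfl
    · change Sum.inr _ = Sum.inr _
      congr 1
      funext n
      cases n with
      | zero => simp
      | succ m => by_cases h : m < l.length <;> simp [h]
  · rfl

lemma eq_eps_or_eq_cons (t : Trace σ) : t = eps ∨ ∃ a t', t = cons a t' := by
  rcases t with (_ | ⟨a, l⟩) | s
  · exact Or.inl rfl
  · exact Or.inr ⟨a, Sum.inl l, rfl⟩
  · refine Or.inr ⟨s 0, Sum.inr (fun n => s (n + 1)), ?_⟩
    change Sum.inr _ = Sum.inr _
    congr 1
    funext n
    cases n <;> rfl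

lemma drop1_surjective : Function.Surjective (drop1 : Trace σ → Trace σ) := by
  intro t
  rcases eq_eps_or_eq_cons t with rfl | ⟨a, t', rfl⟩
  · exact ⟨eps, rfl⟩
  · exact ⟨cons a (cons a t'), drop1_cons a _⟩

lemma ext_eps : ext (eps : Trace σ) = Set.univ :=
  Set.eq_univ_of_forall fun v => ⟨v, (eps_app v).symm⟩

lemma image_drop1_ext (t : Trace σ) : drop1 '' ext t = ext (drop1 t) := by
  rcases eq_eps_or_eq_cons t with rfl | ⟨a, t', rfl⟩
  · rw [drop1_eps, ext_eps, Set.image_univ, drop1_surjective.range_eq]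
  · ext w
    simp only [ext, Set.mem_image, Set.mem_ofPred_eq, drop1_cons]
    constructor
    · rintro ⟨_, ⟨v, rfl⟩, rfl⟩
      exact ⟨v, by rw [cons_app, drop1_cons]⟩
    · rintro ⟨v, rfl⟩
      exact ⟨_, ⟨v, rfl⟩, by rw [cons_app, drop1_cons]⟩

lemma mem_preS_iff {Y : Set (Trace σ)} {u : Trace σ} : u ∈ preS Y ↔ (ext u ∩ Y).Nonempty := by
  simp only [preS, pre, ext, Set.mem_iUnion, Set.mem_ofPred_eq, Set.Nonempty, Set.mem_inter_iff,
    exists_prop]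
  exact ⟨fun ⟨w, hw, v, hv⟩ => ⟨w, ⟨v, hv⟩, hw⟩, fun ⟨w, ⟨v, hv⟩, hw⟩ => ⟨w, hw, v, hv⟩⟩

lemma preS_preimage_drop1 (X : Set (Trace σ)) : preS (drop1 ⁻¹' X) = drop1 ⁻¹' preS X := by
  ext u
  rw [Set.mem_preimage, mem_preS_iff, mem_preS_iff, ← image_drop1_ext,
    Set.image_inter_nonempty_iff]

lemma dp_preimage_drop1 (X : Set (Trace σ)) : dp (drop1 ⁻¹' X) = drop1 ⁻¹' dp X := by
  ext t
  simp only [dp, Set.mem_preimage, Set.mem_ofPred_eq, preS_preimage_drop1, ← image_drop1_ext,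
    Set.image_subset_iff]

lemma prepend_eq_preimage_drop1 (X : Set (Trace σ)) : prepend X = drop1 ⁻¹' X := by
  ext t
  simp [prepend, drop]

end Trace

theorem prepend_definitive {σ : Type} (X : Set (Trace σ))
    (hX : Trace.Definitive X) : Trace.Definitive (Trace.prepend X) := by
  unfold Trace.Definitive at hX ⊢
  rw [Trace.prepend_eq_preimage_drop1, Trace.dp_preimage_drop1, ← hX]
end

section
/- Equivalence of LTL₃ with conventional LTL via restriction to infinite traces: for every formula φ, ⟦φ⟧₃ T ∩ Σ^ω = ⟦φ⟧ T and ⟦φ⟧₃ F ∩ Σ^ω = ⟦φ⟧ F. -/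
/-!
An infinite trace `t` satisfies `t ++ v = t` for every `v`: its only extension is `t` itself, and
it is a prefix of `t` alone. Hence `t ∈ ↯X ↔ t ∈ X`, so `↯` and `⩁` are invisible on `Σ^ω`, and `▷`
commutes with restricting to `Σ^ω` because dropping a state keeps a trace infinite. On infinite
traces the `k`-th iterates in the until clauses of `⟦·⟧₃` unfold, by induction on `k`, to
"`φ` before `k` and `ψ` at `k`" and its dual, the clauses of `⟦·⟧`. So by induction on `φ`, `⟦φ⟧₃ b`
and `⟦φ⟧ b` contain the same infinite traces, while `⟦φ⟧ b ⊆ Σ^ω`.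
-/

namespace Trace

variable {σ : Type}

theorem Inf.exists_eq_inr {t : Trace σ} (h : t.Inf) : ∃ s, t = Sum.inr s := by
  cases t with
  | inl l => simp [Inf] at h
  | inr s => exact ⟨s, rfl⟩

theorem Inf.ne_eps {t : Trace σ} (h : t.Inf) : t ≠ eps := by
  rintro rfl
  simp [Inf, eps] at h

theorem inf_drop1_iff {t : Trace σ} : (drop1 t).Inf ↔ t.Inf := by
  rcases t with (_ | ⟨_, _⟩) | _ <;> simp [drop1, Inf]

theorem inf_drop_iff {t : Trace σ} (n : ℕ) : (t.drop n).Inf ↔ t.Inf := by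
  induction n with
  | zero => rfl
  | succ n ih => rw [drop, Function.iterate_succ_apply', ← drop, inf_drop1_iff, ih]

@[simp] theorem drop_zero (t : Trace σ) : t.drop 0 = t := rfl

theorem drop_drop_one (t : Trace σ) (n : ℕ) : (t.drop 1).drop n = t.drop (n + 1) := rfl

theorem mem_prepend {X : Set (Trace σ)} {t : Trace σ} : t ∈ prepend X ↔ t.drop 1 ∈ X := Iff.rfl

theorem Inf.mem_dp_iff {X : Set (Trace σ)} {t : Trace σ} (h : t.Inf) : t ∈ dp X ↔ t ∈ X := by
  obtain ⟨s, rfl⟩ := h.exists_eq_inr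
  constructor
  · intro hdp
    obtain ⟨u, hu, v, rfl⟩ := Set.mem_iUnion₂.mp (hdp ⟨eps, rfl⟩)
    exact hu
  · rintro hX u ⟨v, rfl⟩
    exact Set.mem_iUnion₂.mpr ⟨Sum.inr s, hX, eps, rfl⟩

def AgreeOnInf (X Y : Set (Trace σ)) : Prop := ∀ ⦃t : Trace σ⦄, t.Inf → (t ∈ X ↔ t ∈ Y)

namespace AgreeOnInf

variable {X Y X' Y' : Set (Trace σ)}

theorem trans {Z : Set (Trace σ)} (h : AgreeOnInf X Y) (h' : AgreeOnInf Y Z) :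
    AgreeOnInf X Z := fun _ ht => (h ht).trans (h' ht)

theorem inter (h : AgreeOnInf X Y) (h' : AgreeOnInf X' Y') : AgreeOnInf (X ∩ X') (Y ∩ Y') :=
  fun _ ht => and_congr (h ht) (h' ht)

theorem union (h : AgreeOnInf X Y) (h' : AgreeOnInf X' Y') : AgreeOnInf (X ∪ X') (Y ∪ Y') :=
  fun _ ht => or_congr (h ht) (h' ht)

theorem prepend (h : AgreeOnInf X Y) : AgreeOnInf (prepend X) (prepend Y) :=
  fun _ ht => h ((inf_drop_iff 1).mpr ht)

theorem inter_omegaSet_eq (h : AgreeOnInf X Y) (hY : Y ⊆ omegaSet σ) : X ∩ omegaSet σ = Y := by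
  ext t
  exact ⟨fun ⟨hX, ht⟩ => (h ht).mp hX, fun ht => ⟨(h (hY ht)).mpr ht, hY ht⟩⟩

end AgreeOnInf

theorem agreeOnInf_dp (X : Set (Trace σ)) : AgreeOnInf (dp X) X := fun _ ht => ht.mem_dp_iff

theorem agreeOnInf_dUnion {X Y X' Y' : Set (Trace σ)} (h : AgreeOnInf X Y)
    (h' : AgreeOnInf X' Y') : AgreeOnInf (dUnion X X') (Y ∪ Y') :=
  (agreeOnInf_dp _).trans (h.union h')

variable {S P R Q : Set (Trace σ)}

theorem agreeOnInf_iterate_prepend_inter (hS : AgreeOnInf S P) (hR : AgreeOnInf R Q) (k : ℕ) :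
    AgreeOnInf ((fun X => prepend X ∩ S)^[k] R)
      {t | (∀ i < k, t.drop i ∈ P) ∧ t.drop k ∈ Q} := by
  induction k with
  | zero => simpa using hR
  | succ k ih =>
    intro t ht
    rw [Function.iterate_succ_apply', Set.mem_inter_iff, hS ht, mem_prepend,
      ih ((inf_drop_iff 1).mpr ht)]
    simp only [Set.mem_ofPred_eq, drop_drop_one, drop_zero, Nat.forall_lt_succ_left]
    tauto

theorem agreeOnInf_iterate_dUnion_prepend (hS : AgreeOnInf S P) (hR : AgreeOnInf R Q) (k : ℕ) :
    AgreeOnInf ((fun X => dUnion (prepend X) S)^[k] R)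
      {t | (∃ i < k, t.drop i ∈ P) ∨ t.drop k ∈ Q} := by
  induction k with
  | zero => simpa using hR
  | succ k ih =>
    intro t ht
    rw [Function.iterate_succ_apply', agreeOnInf_dUnion ih.prepend hS ht]
    simp only [Set.mem_union, Set.mem_ofPred_eq, mem_prepend, drop_drop_one, drop_zero,
      Nat.exists_lt_succ_left]
    rw [or_right_comm, or_comm (a := t ∈ P)]

end Trace

namespace LTL

variable {A : Type}

open Trace

theorem sem_subset_omegaSet (φ : LTL A) (b : Bool) : sem φ b ⊆ omegaSet (Set A) := by
  induction φ generalizing b with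
  | top => cases b <;> simp [sem]
  | atom a => cases b <;> exact fun _ ht => ht.1
  | neg φ ih => exact ih !b
  | and φ ψ ihφ ihψ =>
    cases b
    · exact Set.union_subset (ihφ false) (ihψ false)
    · exact Set.inter_subset_left.trans (ihφ true)
  | next φ ih => exact fun t ht => (inf_drop_iff 1).mp (ih b ht)
  | until_ φ ψ ihφ ihψ =>
    cases b
    · intro t ht
      obtain ⟨i, hi, -⟩ | hψ := ht 0
      · exact absurd hi i.not_lt_zero
      · exact ihψ false hψ
    · rintro t ⟨k, -, hψ⟩
      exact (inf_drop_iff k).mp (ihψ true hψ)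

theorem agreeOnInf_sem3_sem (φ : LTL A) (b : Bool) : AgreeOnInf (sem3 φ b) (sem φ b) := by
  induction φ generalizing b with
  | top =>
    cases b
    · exact fun _ _ => Iff.rfl
    · exact fun _ ht => iff_of_true trivial ht
  | atom a =>
    cases b <;>
      exact (agreeOnInf_dp _).trans fun _ ht =>
        and_congr_left fun _ => iff_of_true ht.ne_eps ht
  | neg φ ih => exact ih !b
  | and φ ψ ihφ ihψ =>
    cases b
    · exact agreeOnInf_dUnion (ihφ false) (ihψ false)
    · exact (ihφ true).inter (ihψ true)
  | next φ ih => exact (ih b).prepend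
  | until_ φ ψ ihφ ihψ =>
    cases b
    · intro t ht
      simp only [sem3, sem, Set.mem_iInter, Set.mem_ofPred_eq]
      exact forall_congr' fun k =>
        agreeOnInf_iterate_dUnion_prepend (ihφ false) (ihψ false) k ht
    · intro t ht
      simp only [sem3, sem, dUnionI, ht.mem_dp_iff, Set.mem_iUnion, Set.mem_ofPred_eq]
      exact exists_congr fun k =>
        agreeOnInf_iterate_prepend_inter (ihφ true) (ihψ true) k ht

end LTL

theorem sem3_inter_omega_eq_sem {A : Type} (φ : LTL A) :
    LTL.sem3 φ true ∩ Trace.omegaSet (Set A) = LTL.sem φ true ∧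
    LTL.sem3 φ false ∩ Trace.omegaSet (Set A) = LTL.sem φ false :=
  ⟨(LTL.agreeOnInf_sem3_sem φ true).inter_omegaSet_eq (LTL.sem_subset_omegaSet φ true),
    (LTL.agreeOnInf_sem3_sem φ false).inter_omegaSet_eq (LTL.sem_subset_omegaSet φ false)⟩
end
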